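/- arXiv:2601.03616 — 2 statements merged into one kernel-verified Lean document; each statement's English description precedes it below -/
import Mathlib

section
/- Let n be a positive integer, let H be an n×n complex Hermitian matrix, let b ∈ ℂⁿ, and let T, R > 0. Then ‖∫_ℝ Λ_T(σ)·exp(−i·σ·H)·b dσ − ∫_{−R}^{R} Λ_T(σ)·exp(−i·σ·H)·b dσ‖ ≤ (4·T·√T/(√π·R))·e^{−R²/(4T)}·‖b‖. -/
/-!
For `σ ≥ 0` the kernel satisfies `0 ≤ Λ_T(σ) ≤ (4πT)^{-1/2} ∫_σ^∞ s e^{-s²/(4T)} ds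
= √(T/π) e^{-σ²/(4T)}`, and `Λ_T(σ) = -Λ_T(-σ)` for `σ < 0`, so `|Λ_T|` is dominated by an even
Gaussian. As `e^{-iσH}` is unitary for Hermitian `H`, the integrand has norm at most
`√(T/π) e^{-σ²/(4T)} ‖b‖`, and the truncation error is at most twice the Gaussian tail
`∫_R^∞ e^{-σ²/(4T)} dσ ≤ R⁻¹ ∫_R^∞ σ e^{-σ²/(4T)} dσ = (2T/R) e^{-R²/(4T)}`.
-/

open MeasureTheory Real Matrix Complex

/-- The kernel `Λ_T` arising from the Gaussian average of the Duhamel term in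
the Kannai transform of an inhomogeneous diffusion equation. -/
noncomputable def Lambda (T σ : ℝ) : ℝ :=
  if 0 ≤ σ then
    (Real.sqrt (4 * Real.pi * T))⁻¹ *
      ∫ s in Set.Ioi σ, Real.exp (-s ^ 2 / (4 * T)) * (s - σ)
  else
    (Real.sqrt (4 * Real.pi * T))⁻¹ *
      ∫ s in Set.Iio σ, Real.exp (-s ^ 2 / (4 * T)) * (s - σ)

open Set Filter Topology

section Gaussian

variable {T : ℝ}

lemma hasDerivAt_gaussian_primitive (hT : T ≠ 0) (s : ℝ) :
    HasDerivAt (fun s => -(2 * T) * Real.exp (-s ^ 2 / (4 * T)))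
      (Real.exp (-s ^ 2 / (4 * T)) * s) s := by
  have h : HasDerivAt (fun s : ℝ => -s ^ 2 / (4 * T)) (-(2 * s) / (4 * T)) s := by
    simpa using ((hasDerivAt_pow 2 s).neg).div_const (4 * T)
  refine (h.exp.const_mul _).congr_deriv ?_
  field_simp
  ring

lemma tendsto_gaussian_primitive_atTop (hT : 0 < T) :
    Tendsto (fun s => -(2 * T) * Real.exp (-s ^ 2 / (4 * T))) atTop (𝓝 0) := by
  have h : Tendsto (fun s : ℝ => -s ^ 2 / (4 * T)) atTop atBot :=
    (tendsto_neg_atTop_atBot.comp (tendsto_pow_atTop two_ne_zero)).atBot_div_const (by positivity)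
  simpa using (Real.tendsto_exp_atBot.comp h).const_mul (-(2 * T))

lemma integrable_exp_neg_sq_div (hT : 0 < T) :
    Integrable fun s : ℝ => Real.exp (-s ^ 2 / (4 * T)) := by
  convert integrable_exp_neg_mul_sq (inv_pos.mpr (mul_pos four_pos hT)) using 3
  ring

lemma integrable_exp_neg_sq_div_mul_self (hT : 0 < T) :
    Integrable fun s : ℝ => Real.exp (-s ^ 2 / (4 * T)) * s := by
  convert integrable_mul_exp_neg_mul_sq (inv_pos.mpr (mul_pos four_pos hT)) using 2
  ring_nf

lemma integral_Ioi_exp_neg_sq_div_mul_self (hT : 0 < T) (σ : ℝ) :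
    ∫ s in Ioi σ, Real.exp (-s ^ 2 / (4 * T)) * s = 2 * T * Real.exp (-σ ^ 2 / (4 * T)) := by
  rw [integral_Ioi_of_hasDerivAt_of_tendsto' (fun s _ => hasDerivAt_gaussian_primitive hT.ne' s)
    (integrable_exp_neg_sq_div_mul_self hT).integrableOn (tendsto_gaussian_primitive_atTop hT)]
  ring

lemma integral_Ioi_exp_neg_sq_div_le (hT : 0 < T) {R : ℝ} (hR : 0 < R) :
    ∫ s in Ioi R, Real.exp (-s ^ 2 / (4 * T)) ≤ 2 * T / R * Real.exp (-R ^ 2 / (4 * T)) :=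
  calc ∫ s in Ioi R, Real.exp (-s ^ 2 / (4 * T))
      ≤ ∫ s in Ioi R, R⁻¹ * (Real.exp (-s ^ 2 / (4 * T)) * s) := by
        refine setIntegral_mono_on (integrable_exp_neg_sq_div hT).integrableOn
          ((integrable_exp_neg_sq_div_mul_self hT).integrableOn.const_mul _) measurableSet_Ioi
          fun s hs => ?_
        rw [mul_left_comm, le_mul_iff_one_le_right (Real.exp_pos _), le_inv_mul_iff₀ hR, mul_one]
        exact hs.le
    _ = 2 * T / R * Real.exp (-R ^ 2 / (4 * T)) := by
        rw [integral_const_mul, integral_Ioi_exp_neg_sq_div_mul_self hT]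
        ring

end Gaussian

lemma measurable_setIntegral_prodMk_preimage {α β : Type*} [MeasurableSpace α] [MeasurableSpace β]
    {ν : Measure β} [SFinite ν] {S : Set (α × β)} (hS : MeasurableSet S) {f : α × β → ℝ}
    (hf : Measurable f) : Measurable fun a => ∫ b in Prod.mk a ⁻¹' S, f (a, b) ∂ν := by
  have h : (fun a => ∫ b in Prod.mk a ⁻¹' S, f (a, b) ∂ν) =
      fun a => ∫ b, S.indicator f (a, b) ∂ν := by
    ext a
    rw [← integral_indicator (measurable_prodMk_left hS)]
    rfl
  rw [h]
  exact (hf.indicator hS).stronglyMeasurable.integral_prod_right'.measurable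

section Lambda

variable {T : ℝ}

lemma Lambda_nonneg {σ : ℝ} (hσ : 0 ≤ σ) : 0 ≤ Lambda T σ := by
  rw [Lambda, if_pos hσ]
  refine mul_nonneg (by positivity) (setIntegral_nonneg measurableSet_Ioi fun s hs => ?_)
  exact mul_nonneg (Real.exp_pos _).le (sub_nonneg.mpr hs.le)

lemma Lambda_le (hT : 0 < T) {σ : ℝ} (hσ : 0 ≤ σ) :
    Lambda T σ ≤ √T / √π * Real.exp (-σ ^ 2 / (4 * T)) := by
  have hmono : ∫ s in Ioi σ, Real.exp (-s ^ 2 / (4 * T)) * (s - σ)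
      ≤ ∫ s in Ioi σ, Real.exp (-s ^ 2 / (4 * T)) * s := by
    refine setIntegral_mono_on ?_ (integrable_exp_neg_sq_div_mul_self hT).integrableOn
      measurableSet_Ioi fun s _ => mul_le_mul_of_nonneg_left (by linarith) (Real.exp_pos _).le
    simpa only [mul_sub, Pi.sub_def] using ((integrable_exp_neg_sq_div_mul_self hT).sub
      ((integrable_exp_neg_sq_div hT).mul_const σ)).integrableOn
  have hconst : (√(4 * π * T))⁻¹ * (2 * T) = √T / √π := by
    rw [sqrt_mul (by positivity), sqrt_mul (by norm_num), show (4 : ℝ) = 2 ^ 2 by norm_num,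
      sqrt_sq zero_le_two]
    field_simp
    rw [sq_sqrt hT.le]
  calc Lambda T σ ≤ (√(4 * π * T))⁻¹ * (2 * T * Real.exp (-σ ^ 2 / (4 * T))) := by
        rw [Lambda, if_pos hσ, ← integral_Ioi_exp_neg_sq_div_mul_self hT]
        exact mul_le_mul_of_nonneg_left hmono (by positivity)
    _ = √T / √π * Real.exp (-σ ^ 2 / (4 * T)) := by rw [← hconst]; ring

lemma Lambda_of_neg {σ : ℝ} (hσ : σ < 0) : Lambda T σ = -Lambda T (-σ) := by
  rw [Lambda, Lambda, if_neg hσ.not_ge, if_pos (neg_nonneg.mpr hσ.le), ← mul_neg,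
    ← integral_Iic_eq_integral_Iio, ← integral_neg]
  have h := integral_comp_neg_Ioi (-σ) fun s => Real.exp (-s ^ 2 / (4 * T)) * (s - σ)
  rw [neg_neg] at h
  rw [← h]
  congr 2 with s
  ring_nf

lemma abs_Lambda_le (hT : 0 < T) (σ : ℝ) :
    |Lambda T σ| ≤ √T / √π * Real.exp (-σ ^ 2 / (4 * T)) := by
  rcases le_or_gt 0 σ with hσ | hσ
  · rw [abs_of_nonneg (Lambda_nonneg hσ)]
    exact Lambda_le hT hσ
  · rw [Lambda_of_neg hσ, abs_neg, abs_of_nonneg (Lambda_nonneg (neg_nonneg.mpr hσ.le)), ← neg_sq]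
    exact Lambda_le hT (neg_nonneg.mpr hσ.le)

lemma measurable_Lambda (T : ℝ) : Measurable (Lambda T) := by
  have hf : Measurable fun p : ℝ × ℝ => Real.exp (-p.2 ^ 2 / (4 * T)) * (p.2 - p.1) := by fun_prop
  exact Measurable.ite measurableSet_Ici
    ((measurable_setIntegral_prodMk_preimage (measurableSet_lt measurable_fst measurable_snd)
      hf).const_mul _)
    ((measurable_setIntegral_prodMk_preimage (measurableSet_lt measurable_snd measurable_fst)
      hf).const_mul _)

end Lambda

lemma norm_integral_sub_intervalIntegral_le {E : Type*} [NormedAddCommGroup E] [NormedSpace ℝ E]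
    {g : ℝ → E} {φ : ℝ → ℝ} (hg : AEStronglyMeasurable g) (hφ : Integrable φ)
    (hgφ : ∀ σ, ‖g σ‖ ≤ φ σ) (hφ_even : ∀ σ, φ (-σ) = φ σ) {R : ℝ} (hR : 0 ≤ R) :
    ‖(∫ σ, g σ) - ∫ σ in -R..R, g σ‖ ≤ 2 * ∫ σ in Ioi R, φ σ := by
  have hgi : Integrable g := hφ.mono' hg (Eventually.of_forall hgφ)
  have hsplit : (∫ σ, g σ) - ∫ σ in -R..R, g σ = ∫ σ in (Ioc (-R) R)ᶜ, g σ := by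
    rw [intervalIntegral.integral_of_le (by linarith), ← integral_add_compl measurableSet_Ioc hgi,
      add_sub_cancel_left]
  have hreflect : ∫ σ in Iic (-R), φ σ = ∫ σ in Ioi R, φ σ := by
    rw [← integral_comp_neg_Ioi]
    simp only [hφ_even]
  calc ‖(∫ σ, g σ) - ∫ σ in -R..R, g σ‖
      ≤ ∫ σ in (Ioc (-R) R)ᶜ, φ σ := by
        rw [hsplit]
        exact (norm_integral_le_integral_norm _).trans
          (setIntegral_mono hgi.norm.integrableOn hφ.integrableOn hgφ)
    _ = (∫ σ in Iic (-R), φ σ) + ∫ σ in Ioi R, φ σ := by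
        rw [compl_Ioc]
        exact setIntegral_union (Iic_disjoint_Ioi (by linarith)) measurableSet_Ioi
          hφ.integrableOn hφ.integrableOn
    _ = 2 * ∫ σ in Ioi R, φ σ := by rw [hreflect, two_mul]

section

-- The L2 operator norm makes matrices a C⋆-algebra, where exponentials of skew-adjoint elements
-- are unitary; it induces the usual topology, on which alone `NormedSpace.exp` depends.
open scoped Matrix.Norms.L2Operator
variable {n : Type*} [Fintype n] [DecidableEq n]

lemma Matrix.IsHermitian.exp_neg_I_mul_smul_eq_expUnitary {H : Matrix n n ℂ} (hH : H.IsHermitian)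
    (t : ℝ) : NormedSpace.exp (-(I * (t : ℂ)) • H) =
      (selfAdjoint.expUnitary ((-t) • (⟨H, hH⟩ : selfAdjoint (Matrix n n ℂ))) : Matrix n n ℂ) := by
  rw [selfAdjoint.expUnitary_coe, selfAdjoint.val_smul, RCLike.real_smul_eq_coe_smul (K := ℂ),
    smul_smul]
  congr 2
  simp

lemma Matrix.IsHermitian.norm_toEuclideanCLM_exp_apply {H : Matrix n n ℂ} (hH : H.IsHermitian)
    (t : ℝ) (b : EuclideanSpace ℂ n) :
    ‖toEuclideanCLM (𝕜 := ℂ) (NormedSpace.exp (-(I * (t : ℂ)) • H)) b‖ = ‖b‖ := by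
  rw [hH.exp_neg_I_mul_smul_eq_expUnitary]
  exact ContinuousLinearMap.norm_map_of_mem_unitary (Unitary.map_mem _ (SetLike.coe_mem _)) b

lemma Matrix.IsHermitian.continuous_toEuclideanCLM_exp_apply {H : Matrix n n ℂ}
    (hH : H.IsHermitian) (b : EuclideanSpace ℂ n) :
    Continuous fun t : ℝ => toEuclideanCLM (𝕜 := ℂ) (NormedSpace.exp (-(I * (t : ℂ)) • H)) b := by
  simp only [hH.exp_neg_I_mul_smul_eq_expUnitary]
  have hE : Continuous (toEuclideanCLM (𝕜 := ℂ) (n := n)) :=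
    (toEuclideanCLM (𝕜 := ℂ) (n := n)).toAlgEquiv.toLinearMap.continuous_of_finiteDimensional
  exact (hE.comp (continuous_subtype_val.comp (selfAdjoint.continuous_expUnitary.comp
    (continuous_neg.smul continuous_const)))).clm_apply continuous_const

end

theorem kannai_truncation_inhomogeneous_general
    (n : ℕ) (H : Matrix (Fin n) (Fin n) ℂ) (hH : H.IsHermitian)
    (b : EuclideanSpace ℂ (Fin n)) (T R : ℝ) (hT : 0 < T) (hR : 0 < R) :
    ‖(∫ σ : ℝ, Lambda T σ •
          Matrix.toEuclideanCLM (𝕜 := ℂ) (NormedSpace.exp (-(Complex.I * (σ : ℂ)) • H)) b) -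
        ∫ σ in (-R : ℝ)..R, Lambda T σ •
          Matrix.toEuclideanCLM (𝕜 := ℂ) (NormedSpace.exp (-(Complex.I * (σ : ℂ)) • H)) b‖ ≤
      (4 * T * Real.sqrt T / (Real.sqrt Real.pi * R)) * Real.exp (-R ^ 2 / (4 * T)) * ‖b‖ := by
  set C := √T / √π * ‖b‖
  have hbound : ∀ σ : ℝ, ‖Lambda T σ •
      toEuclideanCLM (𝕜 := ℂ) (NormedSpace.exp (-(I * (σ : ℂ)) • H)) b‖ ≤
        C * Real.exp (-σ ^ 2 / (4 * T)) := fun σ => by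
    rw [norm_smul, hH.norm_toEuclideanCLM_exp_apply, Real.norm_eq_abs, mul_right_comm]
    exact mul_le_mul_of_nonneg_right (abs_Lambda_le hT σ) (norm_nonneg b)
  refine (norm_integral_sub_intervalIntegral_le
    ((measurable_Lambda T).aestronglyMeasurable.smul
      (hH.continuous_toEuclideanCLM_exp_apply b).aestronglyMeasurable)
    ((integrable_exp_neg_sq_div hT).const_mul C) hbound (fun σ => by rw [neg_sq]) hR.le).trans ?_
  rw [integral_const_mul]
  calc 2 * (C * ∫ σ in Ioi R, Real.exp (-σ ^ 2 / (4 * T)))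
      ≤ 2 * (C * (2 * T / R * Real.exp (-R ^ 2 / (4 * T)))) := by
        gcongr
        exact integral_Ioi_exp_neg_sq_div_le hT hR
    _ = _ := by
        simp only [C]
        field_simp
        ring

/-- Gaussian truncation error for the inhomogeneous Kannai integral:
truncating `∫ Λ_T(σ) e^{-iσH} b dσ` to `[-R, R]` incurs an error of at most
`(4 T √T/(√π R)) e^{-R²/(4T)} ‖b‖`. -/
theorem kannai_truncation_inhomogeneous
    (n : ℕ) (hn : 0 < n) (H : Matrix (Fin n) (Fin n) ℂ) (hH : H.IsHermitian)
    (b : EuclideanSpace ℂ (Fin n)) (T R : ℝ) (hT : 0 < T) (hR : 0 < R) :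
    ‖(∫ σ : ℝ, Lambda T σ •
          Matrix.toEuclideanCLM (𝕜 := ℂ) (NormedSpace.exp (-(Complex.I * (σ : ℂ)) • H)) b) -
        ∫ σ in (-R : ℝ)..R, Lambda T σ •
          Matrix.toEuclideanCLM (𝕜 := ℂ) (NormedSpace.exp (-(Complex.I * (σ : ℂ)) • H)) b‖ ≤
      (4 * T * Real.sqrt T / (Real.sqrt Real.pi * R)) * Real.exp (-R ^ 2 / (4 * T)) * ‖b‖ :=
  kannai_truncation_inhomogeneous_general n H hH b T R hT hR
end

section
/- Let n be a positive integer, let H be an n×n complex Hermitian matrix, let T > 0, and let Q ≥ 1 be an integer. Consider the smooth matrix-valued function F(s) := κ_T(s)·exp(−i·s·H). Then for every s ∈ ℝ, the 2Q-th derivative satisfies ‖F^{(2Q)}(s)‖ ≤ (√((4Q)!)/√T)·(‖H‖ + 1/√(2T))^{2Q}. -/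
/-!
By Leibniz's rule, `F^{(2Q)}(s)` is a binomial sum of terms `κ_T^{(i)}(s) (-iH)^{2Q-i} e^{-isH}`.
Since `e^{-isH}` is unitary, the matrix factor has norm at most `‖H‖^{2Q-i}`. The kernel `κ_T` is
the Fourier transform of the Gaussian `e^{-4π²Tx²}`, so `κ_T^{(i)}` is the Fourier transform of
`(-2πix)^i e^{-4π²Tx²}`; absorbing `|x|^i` into half of the Gaussian (via `y^i / i! ≤ e^y`) bounds
its `L¹` norm by `√(i!/T^i) / √(2πT)`. As `2^i i! ≤ (2i)! ≤ (4Q)!`, this is at most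
`√((4Q)!)/√T · (2T)^{-i/2}`, and the binomial theorem sums the bounds to the claim.
-/

open MeasureTheory Real Matrix Complex
open scoped Matrix.Norms.L2Operator FourierTransform Nat

theorem norm_iteratedDeriv_smul_le_mul_add_pow {𝕜 𝕜' F : Type*} [NontriviallyNormedField 𝕜]
    [NormedField 𝕜'] [NormedAlgebra 𝕜 𝕜'] [NormedAddCommGroup F] [NormedSpace 𝕜 F]
    [NormedSpace 𝕜' F] [IsScalarTower 𝕜 𝕜' F] {f : 𝕜 → 𝕜'} {g : 𝕜 → F} {m : ℕ}
    (hf : ContDiff 𝕜 m f) (hg : ContDiff 𝕜 m g) {x : 𝕜} {C a b : ℝ}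
    (hf_le : ∀ i ≤ m, ‖iteratedDeriv i f x‖ ≤ C * a ^ i)
    (hg_le : ∀ j ≤ m, ‖iteratedDeriv j g x‖ ≤ b ^ j) :
    ‖iteratedDeriv m (fun y => f y • g y) x‖ ≤ C * (a + b) ^ m := by
  rw [← norm_iteratedFDeriv_eq_norm_iteratedDeriv]
  refine (norm_iteratedFDeriv_smul_le hf hg x le_rfl).trans ?_
  rw [add_pow, Finset.mul_sum]
  refine Finset.sum_le_sum fun i hi => ?_
  have hi : i ≤ m := Nat.lt_succ_iff.mp (Finset.mem_range.mp hi)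
  simp only [norm_iteratedFDeriv_eq_norm_iteratedDeriv]
  have hf_i := hf_le i hi
  calc (m.choose i : ℝ) * ‖iteratedDeriv i f x‖ * ‖iteratedDeriv (m - i) g x‖
      ≤ m.choose i * (C * a ^ i) * b ^ (m - i) := by
        have := (norm_nonneg _).trans hf_i
        gcongr
        exact hg_le (m - i) (Nat.sub_le m i)
    _ = C * (a ^ i * b ^ (m - i) * m.choose i) := by ring

section ExpSMul

variable {𝕂 𝔸 : Type*} [RCLike 𝕂] [NormedRing 𝔸] [NormedAlgebra 𝕂 𝔸] [CompleteSpace 𝔸]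

theorem iteratedDeriv_exp_smul (A : 𝔸) (j : ℕ) :
    iteratedDeriv j (fun t : 𝕂 => NormedSpace.exp (t • A)) =
      fun t => A ^ j * NormedSpace.exp (t • A) := by
  induction j with
  | zero => simp
  | succ j ih =>
    ext t
    rw [iteratedDeriv_succ, ih, pow_succ, mul_assoc]
    exact ((hasDerivAt_exp_smul_const' A t).const_mul (A ^ j)).deriv

theorem contDiff_exp_smul (A : 𝔸) {N : ℕ∞} :
    ContDiff 𝕂 N (fun t : 𝕂 => NormedSpace.exp (t • A)) :=
  contDiff_of_differentiable_iteratedDeriv fun j _ => by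
    rw [iteratedDeriv_exp_smul]
    exact (differentiable_exp_smul_const 𝕂 A).const_mul _

end ExpSMul

theorem norm_iteratedDeriv_exp_smul_le {𝔸 : Type*} [NormedRing 𝔸] [NormedAlgebra ℝ 𝔸]
    [CompleteSpace 𝔸] [StarRing 𝔸] [CStarRing 𝔸] [StarModule ℝ 𝔸] [ContinuousStar 𝔸]
    {A : 𝔸} (hA : A ∈ skewAdjoint 𝔸) (j : ℕ) (t : ℝ) :
    ‖iteratedDeriv j (fun t : ℝ => NormedSpace.exp (t • A)) t‖ ≤ ‖A‖ ^ j := by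
  rcases subsingleton_or_nontrivial 𝔸 with _ | _
  · rw [Subsingleton.elim (iteratedDeriv j _ t : 𝔸) 0, norm_zero]; positivity
  let : NormedAlgebra ℚ 𝔸 := .restrictScalars ℚ ℝ 𝔸
  have hU : NormedSpace.exp (t • A) ∈ unitary 𝔸 :=
    NormedSpace.exp_mem_unitary_of_mem_skewAdjoint (skewAdjoint.smul_mem t hA)
  rw [iteratedDeriv_exp_smul, CStarRing.norm_mul_mem_unitary _ hU]
  exact norm_pow_le A j

theorem abs_pow_mul_exp_neg_mul_sq_le {c : ℝ} (hc : 0 < c) (k : ℕ) (y : ℝ) :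
    |y| ^ k * rexp (-(c * y ^ 2)) ≤ √(k ! / (2 * c) ^ k) := by
  refine le_sqrt_of_sq_le ?_
  rw [le_div_iff₀ (by positivity)]
  have hexp := pow_div_factorial_le_exp (x := 2 * c * y ^ 2) (by positivity) k
  rw [div_le_iff₀ (by positivity)] at hexp
  calc (|y| ^ k * rexp (-(c * y ^ 2))) ^ 2 * (2 * c) ^ k
      = (2 * c * y ^ 2) ^ k * rexp (-(2 * c * y ^ 2)) := by
        rw [mul_pow, ← pow_mul, mul_comm k 2, pow_mul, sq_abs, ← Real.exp_nat_mul]; ring_nf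
    _ ≤ rexp (2 * c * y ^ 2) * k ! * rexp (-(2 * c * y ^ 2)) := by gcongr
    _ = k ! := by rw [mul_right_comm, ← Real.exp_add, add_neg_cancel, Real.exp_zero, one_mul]

theorem norm_iteratedDeriv_ofReal_comp {f : ℝ → ℝ} {k : ℕ} (hf : ContDiff ℝ k f) (x : ℝ) :
    ‖iteratedDeriv k (fun y => (f y : ℂ)) x‖ = ‖iteratedDeriv k f x‖ := by
  simp only [← norm_iteratedFDeriv_eq_norm_iteratedDeriv]
  exact ofRealLI.norm_iteratedFDeriv_comp_left hf.contDiffAt le_rfl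

noncomputable def kannaiKernel (T s : ℝ) : ℝ := (√(4 * π * T))⁻¹ * rexp (-s ^ 2 / (4 * T))

theorem contDiff_kannaiKernel (T : ℝ) {N : ℕ∞} : ContDiff ℝ N (kannaiKernel T) := by
  unfold kannaiKernel; fun_prop

theorem ofReal_kannaiKernel_eq_fourier {T : ℝ} (hT : 0 < T) :
    (fun s => (kannaiKernel T s : ℂ)) =
      𝓕 (fun x : ℝ => (rexp (-(4 * π ^ 2 * T) * x ^ 2) : ℂ)) := by
  have hb : 0 < ((4 * π * T : ℝ) : ℂ).re := by rw [ofReal_re]; positivity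
  have hgauss : (fun x : ℝ => (rexp (-(4 * π ^ 2 * T) * x ^ 2) : ℂ)) =
      fun x : ℝ => cexp (-π * ((4 * π * T : ℝ) : ℂ) * x ^ 2) := by
    ext x; push_cast; ring_nf
  have hsqrt : ((4 * π * T : ℝ) : ℂ) ^ (1 / 2 : ℂ) = (√(4 * π * T) : ℂ) := by
    rw [sqrt_eq_rpow, ofReal_cpow (by positivity)]; norm_num
  rw [hgauss, fourier_gaussian_pi hb, hsqrt]
  ext s
  rw [kannaiKernel]
  push_cast
  field_simp

theorem norm_iteratedDeriv_kannaiKernel_le {T : ℝ} (hT : 0 < T) (k : ℕ) (s : ℝ) :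
    ‖iteratedDeriv k (kannaiKernel T) s‖ ≤ √(k ! / T ^ k) / √(2 * π * T) := by
  set β := 2 * π ^ 2 * T
  have hβ : 0 < β := by positivity
  set w : ℝ → ℂ := fun x => (rexp (-(4 * π ^ 2 * T) * x ^ 2) : ℂ)
  have hw (x : ℝ) : ‖w x‖ = rexp (-(β * x ^ 2)) * rexp (-β * x ^ 2) := by
    rw [norm_real, norm_of_nonneg (Real.exp_nonneg _), ← Real.exp_add]
    simp only [β]; ring_nf
  have hw_int (j : ℕ) : Integrable (fun x : ℝ => x ^ j • w x) := by
    refine ((integrable_exp_neg_mul_sq hβ).const_mul √(j ! / (2 * β) ^ j)).mono'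
      (by fun_prop) (.of_forall fun x => ?_)
    rw [norm_smul, hw, norm_pow, norm_eq_abs, ← mul_assoc]
    gcongr
    exact abs_pow_mul_exp_neg_mul_sq_le hβ j x
  -- one half of the Gaussian absorbs `|2πx|^k`, the other half is integrated
  have hbound (x : ℝ) :
      ‖(-2 * π * I * x) ^ k • w x‖ ≤ √(k ! / T ^ k) * rexp (-β * x ^ 2) := by
    have h := abs_pow_mul_exp_neg_mul_sq_le (half_pos hT) k (2 * π * x)
    rw [show T / 2 * (2 * π * x) ^ 2 = β * x ^ 2 by ring, mul_div_cancel₀ _ two_ne_zero] at h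
    have hnorm : ‖(-2 * π * I * x : ℂ)‖ = |2 * π * x| := by simp [abs_mul, abs_of_pos pi_pos]
    rw [norm_smul, norm_pow, hnorm, hw, ← mul_assoc]
    gcongr
  calc ‖iteratedDeriv k (kannaiKernel T) s‖ = ‖iteratedDeriv k (𝓕 w) s‖ := by
        rw [← ofReal_kannaiKernel_eq_fourier hT,
          norm_iteratedDeriv_ofReal_comp (contDiff_kannaiKernel T)]
    _ = ‖𝓕 (fun x : ℝ => (-2 * π * I * x) ^ k • w x) s‖ := by
        rw [Real.iteratedDeriv_fourier (N := k) (fun j _ => hw_int j) le_rfl]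
    _ ≤ ∫ x : ℝ, ‖(-2 * π * I * x) ^ k • w x‖ :=
        VectorFourier.norm_fourierIntegral_le_integral_norm _ _ _ _ _
    _ ≤ ∫ x : ℝ, √(k ! / T ^ k) * rexp (-β * x ^ 2) :=
        integral_mono_of_nonneg (.of_forall fun _ => norm_nonneg _)
          ((integrable_exp_neg_mul_sq hβ).const_mul _) (.of_forall hbound)
    _ = √(k ! / T ^ k) / √(2 * π * T) := by
        rw [integral_const_mul, integral_gaussian, div_eq_mul_inv _ √(2 * π * T), ← sqrt_inv]
        congr 2
        simp only [β]
        field_simp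

theorem sqrt_factorial_div_pow_div_sqrt_le {T : ℝ} (hT : 0 < T) {i Q : ℕ} (hi : i ≤ 2 * Q) :
    √(i ! / T ^ i) / √(2 * π * T) ≤ √((4 * Q) !) / √T * (1 / √(2 * T)) ^ i := by
  have hfac : (2 : ℝ) ^ i * i ! ≤ (4 * Q) ! := mod_cast
    (Nat.two_pow_mul_factorial_le_factorial_two_mul i).trans (Nat.factorial_le (by omega))
  rw [← pow_le_pow_iff_left₀ (by positivity) (by positivity) two_ne_zero, mul_pow, ← pow_mul,
    mul_comm i, pow_mul]
  simp (disch := positivity) only [div_pow, one_pow, sq_sqrt]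
  calc i ! / T ^ i / (2 * π * T) = 2 ^ i * i ! / (2 * π) * (1 / T / (2 * T) ^ i) := by
        field_simp; ring
    _ ≤ (4 * Q) ! * (1 / T / (2 * T) ^ i) := by
        gcongr
        exact (div_le_self (by positivity) (by linarith [pi_gt_three])).trans hfac
    _ = (4 * Q) ! / T * (1 / (2 * T) ^ i) := by ring

theorem kannai_wave_product_deriv_bound_general
    (n : ℕ) (H : Matrix (Fin n) (Fin n) ℂ) (hH : H.IsHermitian)
    (T : ℝ) (hT : 0 < T) (Q : ℕ) (s : ℝ) :
    ‖iteratedDeriv (2 * Q)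
        (fun s : ℝ => ((Real.sqrt (4 * Real.pi * T))⁻¹ * Real.exp (-s ^ 2 / (4 * T))) •
          NormedSpace.exp (-(Complex.I * (s : ℂ)) • H)) s‖ ≤
      (Real.sqrt (Nat.factorial (4 * Q)) / Real.sqrt T) *
        (‖H‖ + 1 / Real.sqrt (2 * T)) ^ (2 * Q) := by
  have hA : (-I) • H ∈ skewAdjoint (Matrix (Fin n) (Fin n) ℂ) :=
    hH.isSelfAdjoint.smul_mem_skewAdjoint (by simp [skewAdjoint.mem_iff])
  have hF : (fun s : ℝ => ((Real.sqrt (4 * Real.pi * T))⁻¹ * Real.exp (-s ^ 2 / (4 * T))) •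
      NormedSpace.exp (-(Complex.I * (s : ℂ)) • H)) =
      fun s => kannaiKernel T s • NormedSpace.exp (s • (-I) • H) := by
    ext1 t
    rw [kannaiKernel, ← Complex.coe_smul t, smul_smul, mul_neg, mul_comm (t : ℂ)]
  rw [hF, add_comm]
  refine norm_iteratedDeriv_smul_le_mul_add_pow (contDiff_kannaiKernel T) (contDiff_exp_smul _)
    (fun i hi => (norm_iteratedDeriv_kannaiKernel_le hT i s).trans
      (sqrt_factorial_div_pow_div_sqrt_le hT hi)) (fun j _ => ?_)
  simpa [norm_smul] using norm_iteratedDeriv_exp_smul_le hA j s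

/-- Bound on the `2Q`-th derivative of `F(s) = κ_T(s) e^{-isH}`:
`‖F^{(2Q)}(s)‖ ≤ (√((4Q)!)/√T) (‖H‖ + 1/√(2T))^{2Q}`, where `‖·‖` is the
operator norm induced by the Euclidean norm. -/
theorem kannai_wave_product_deriv_bound
    (n : ℕ) (hn : 0 < n) (H : Matrix (Fin n) (Fin n) ℂ) (hH : H.IsHermitian)
    (T : ℝ) (hT : 0 < T) (Q : ℕ) (hQ : 1 ≤ Q) (s : ℝ) :
    ‖iteratedDeriv (2 * Q)
        (fun s : ℝ => ((Real.sqrt (4 * Real.pi * T))⁻¹ * Real.exp (-s ^ 2 / (4 * T))) •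
          NormedSpace.exp (-(Complex.I * (s : ℂ)) • H)) s‖ ≤
      (Real.sqrt (Nat.factorial (4 * Q)) / Real.sqrt T) *
        (‖H‖ + 1 / Real.sqrt (2 * T)) ^ (2 * Q) :=
  kannai_wave_product_deriv_bound_general n H hH T hT Q s
end
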